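/- In Thompson's monoid M, the elements u_k defined by u_0 = (1 + x_0 - x_1)(1 - x_3) and u_k = (1 - x_1)φ(u_{k-1}) in K[M] satisfy the closed formula u_k = (1 - x_1)(1 - x_2)···(1 - x_k)(1 + x_k - x_{k+1})(1 - x_{k+3}) for all k ≥ 1. -/

import Mathlib

/-- The defining relation of Thompson's monoid: `x_j x_i = x_i x_{j+1}` for `i < j`. -/
def thompsonRel : FreeMonoid ℕ → FreeMonoid ℕ → Prop := fun a b =>
  ∃ i j : ℕ, i < j ∧ a = FreeMonoid.of j * FreeMonoid.of i ∧
    b = FreeMonoid.of i * FreeMonoid.of (j + 1)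

/-- The congruence on the free monoid generated by the Thompson relations. -/
def thompsonCon : Con (FreeMonoid ℕ) := conGen thompsonRel

/-- Thompson's monoid `M`. -/
abbrev ThompsonM := thompsonCon.Quotient

/-- The generators `x_n` of Thompson's monoid. -/
def xM (n : ℕ) : ThompsonM := thompsonCon.mk' (FreeMonoid.of n)

/-- The shift endomorphism `φ : M → M`, `x_i ↦ x_{i+1}`. -/
def shiftM : ThompsonM →* ThompsonM :=
  Con.lift _ ((Con.mk' thompsonCon).comp (FreeMonoid.map Nat.succ)) (by
    apply Con.conGen_le.2
    rintro a b ⟨i, j, hij, rfl, rfl⟩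
    simp only [Con.ker_rel, MonoidHom.comp_apply, map_mul, FreeMonoid.map_of]
    exact Con.eq _ |>.2 (ConGen.Rel.of _ _ ⟨i + 1, j + 1, by omega, rfl, rfl⟩))

/-- The relators of Thompson's group `F` (infinite presentation). -/
def thompsonRels : Set (FreeGroup ℕ) :=
  {w | ∃ i j : ℕ, i < j ∧
    w = FreeGroup.of j * FreeGroup.of i * (FreeGroup.of i * FreeGroup.of (j + 1))⁻¹}

/-- Thompson's group `F`. -/
abbrev ThompsonF := PresentedGroup thompsonRels

/-- The generators `x_n` of Thompson's group. -/
def xF (n : ℕ) : ThompsonF := PresentedGroup.of n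

/-- Word length, as a monoid homomorphism on the free monoid. -/
def lenHom : FreeMonoid ℕ →* Multiplicative ℕ where
  toFun w := Multiplicative.ofAdd w.length
  map_one' := by simp
  map_mul' a b := by
    simp [FreeMonoid.length_mul, ofAdd_add]

/-- Length is well defined on Thompson's monoid. -/
def lenM : ThompsonM →* Multiplicative ℕ :=
  Con.lift _ lenHom (by
    apply Con.conGen_le.2
    rintro a b ⟨i, j, hij, rfl, rfl⟩
    simp only [Con.ker_rel, lenHom, MonoidHom.coe_mk, OneHom.coe_mk, FreeMonoid.length_mul,
      FreeMonoid.length_of]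
    rfl)

/-- The length of an element of Thompson's monoid. -/
def mlen (g : ThompsonM) : ℕ := Multiplicative.toAdd (lenM g)

/-- The degree of an element of the monoid ring `K[M]`. -/
noncomputable def mdeg {K : Type*} [Field K] (a : MonoidAlgebra K ThompsonM) : ℕ :=
  a.coeff.support.sup mlen

/-- The submonoid `M_i` of `M` generated by `x_i, x_{i+1}, …`. -/
def Msub (i : ℕ) : Submonoid ThompsonM :=
  Submonoid.closure {g | ∃ n : ℕ, i ≤ n ∧ g = xM n}

/-- The shift endomorphism of the monoid ring `K[M]` induced by `φ`. -/
noncomputable def shiftA (K : Type*) [Field K] :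
    MonoidAlgebra K ThompsonM →+* MonoidAlgebra K ThompsonM :=
  MonoidAlgebra.mapDomainRingHom K shiftM

/-- The natural homomorphism of Thompson's monoid into Thompson's group. -/
def iotaMF : ThompsonM →* ThompsonF :=
  Con.lift _ (FreeMonoid.lift xF) (by
    apply Con.conGen_le.2
    rintro a b ⟨i, j, hij, rfl, rfl⟩
    simp only [Con.ker_rel, map_mul, FreeMonoid.lift_eval_of]
    have h : (FreeGroup.of j * FreeGroup.of i *
        (FreeGroup.of i * FreeGroup.of (j + 1))⁻¹ : FreeGroup ℕ) ∈ thompsonRels :=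
      ⟨i, j, hij, rfl⟩
    have h1 : PresentedGroup.mk thompsonRels
        (FreeGroup.of j * FreeGroup.of i * (FreeGroup.of i * FreeGroup.of (j + 1))⁻¹) = 1 := by
      exact (QuotientGroup.eq_one_iff _).2 (Subgroup.subset_normalClosure h)
    have := h1
    rw [map_mul, map_mul, map_inv, map_mul, mul_inv_eq_one] at this
    simpa [xF, PresentedGroup.of] using this)

/-- The generator `x_n` as an element of the group ring `K[F]`. -/
noncomputable def XF (K : Type*) [Field K] (n : ℕ) : MonoidAlgebra K ThompsonF :=
  MonoidAlgebra.of K ThompsonF (xF n)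

/-- The generator `x_n` as an element of the monoid ring `K[M]`. -/
noncomputable def XMa (K : Type*) [Field K] (n : ℕ) : MonoidAlgebra K ThompsonM :=
  MonoidAlgebra.of K ThompsonM (xM n)


/-!
Applying `φ` to the closed formula for `u_k` shifts every index by one, and left multiplication by
`1 - x_1` prepends the missing first factor of the product; so the formula holds for any ring
endomorphism sending `x_n` to `x_{n+1}`, whatever relations the `x_n` satisfy.
-/

section ShiftRecursion

variable {R : Type*} [Ring R] (φ : R →+* R) (x : ℕ → R)

theorem map_prod_range_one_sub (hφ : ∀ n, φ (x n) = x (n + 1)) (k : ℕ) :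
    φ ((List.range k).map (fun i => 1 - x (i + 1))).prod =
      ((List.range k).map (fun i => 1 - x (i + 2))).prod := by
  simp [map_list_prod, Function.comp_def, hφ]

theorem shift_recursion_closed_form (hφ : ∀ n, φ (x n) = x (n + 1)) (U : ℕ → R)
    (hU0 : U 0 = (1 + x 0 - x 1) * (1 - x 3)) (hU : ∀ k, U (k + 1) = (1 - x 1) * φ (U k))
    (k : ℕ) :
    U (k + 1) = ((List.range (k + 1)).map (fun i => 1 - x (i + 1))).prod *
      (1 + x (k + 1) - x (k + 2)) * (1 - x (k + 4)) := by
  induction k with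
  | zero => simp [hU, hU0, hφ, mul_assoc]
  | succ k ih =>
    rw [hU, ih, List.prod_range_succ' _ (k + 1)]
    simp only [map_mul, map_sub, map_add, map_one, hφ, map_prod_range_one_sub φ x hφ]
    noncomm_ring

end ShiftRecursion

theorem shiftM_xM (n : ℕ) : shiftM (xM n) = xM (n + 1) := rfl

theorem shiftA_XMa (K : Type*) [Field K] (n : ℕ) : shiftA K (XMa K n) = XMa K (n + 1) := by
  simp [shiftA, XMa, shiftM_xM]

/-- the elements `u_0 = (1 + x_0 - x_1)(1 - x_3)`,
`u_k = (1-x_1)φ(u_{k-1})` satisfy the closed formula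
`u_k = (1-x_1)(1-x_2)⋯(1-x_k)(1 + x_k - x_{k+1})(1 - x_{k+3})` for `k ≥ 1`. -/
theorem stmt16 (K : Type*) [Field K] (U : ℕ → MonoidAlgebra K ThompsonM)
    (hU0 : U 0 = (1 + XMa K 0 - XMa K 1) * (1 - XMa K 3))
    (hU : ∀ k : ℕ, U (k + 1) = (1 - XMa K 1) * shiftA K (U k))
    (k : ℕ) (hk : 1 ≤ k) :
    U k = (((List.range k).map (fun i => 1 - XMa K (i + 1))).prod) *
      (1 + XMa K k - XMa K (k + 1)) * (1 - XMa K (k + 3)) := by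
  obtain ⟨k, rfl⟩ := Nat.exists_eq_add_of_le' hk
  exact shift_recursion_closed_form (shiftA K) (XMa K) (shiftA_XMa K) U hU0 hU k
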